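/- Let μ > 0 and K_μ = {ω ∈ L²(ℝ²₊) : ω ≥ 0, ∫ x₂ω dx = μ, ∫ ω dx ≤ 1}. Then sup_{ω ∈ K_μ} E₂[ω] < ∞, where E₂[ω] = E[ω] − (1/2)∫ ω² dx. More precisely, E₂[ω] ≤ C μ^{2/3} for all ω ∈ K_μ, with C an absolute constant. -/

import Mathlib

open Real MeasureTheory

def upperHalf : Set (ℝ × ℝ) := {p | 0 < p.2}

noncomputable def sqdist (x y : ℝ × ℝ) : ℝ := (x.1 - y.1) ^ 2 + (x.2 - y.2) ^ 2

noncomputable def halfPlaneGreen (x y : ℝ × ℝ) : ℝ :=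
  (1 / (4 * π)) * Real.log (1 + 4 * x.2 * y.2 / sqdist x y)

noncomputable def kineticEnergy (ω : ℝ × ℝ → ℝ) : ℝ :=
  (1 / 2) * ∫ x in upperHalf, ∫ y in upperHalf, halfPlaneGreen x y * ω x * ω y

/-- The penalized energy `E₂[ω] = E[ω] − (1/2) ∫ ω²`. -/
noncomputable def E₂ (ω : ℝ × ℝ → ℝ) : ℝ :=
  kineticEnergy ω - (1 / 2) * ∫ p in upperHalf, (ω p) ^ 2

/-- Membership in the admissible class `K_μ`
(nonnegative, with the natural integrability, impulse `μ` and mass at most `1`). -/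
def memK (μ : ℝ) (ω : ℝ × ℝ → ℝ) : Prop :=
  (∀ p, 0 ≤ ω p) ∧
  MeasureTheory.Integrable ω (MeasureTheory.volume.restrict upperHalf) ∧
  MeasureTheory.MemLp ω 2 (MeasureTheory.volume.restrict upperHalf) ∧
  MeasureTheory.Integrable (fun p => p.2 * ω p) (MeasureTheory.volume.restrict upperHalf) ∧
  (∫ p in upperHalf, p.2 * ω p) = μ ∧
  (∫ p in upperHalf, ω p) ≤ 1

/-!
Split the Green function along the region `|x - y|⁶ x₂ y₂ ≤ δ⁴`. Inside it
`4 x₂ y₂ / |x - y|² ≤ 4 δ⁴ / |x - y|⁸`, so the layer-cake formula gives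
`∫ G(x, y) dy ≤ 8 Γ(3/4) δ` uniformly in `x`, and by the Schur test this part of `E[ω]` is at most
`4 Γ(3/4) δ ∫ ω²`; for `δ = (8 Γ(3/4))⁻¹` it is absorbed by the penalty `(1/2) ∫ ω²`.
Outside it, `log (1 + s) ≤ 4 s^{1/4}` gives `G(x, y) ≤ (x₂ y₂ / δ)^{1/3}`, a rank-one kernel,
and since the mass is at most one, Jensen's inequality gives `∫ x₂^{1/3} ω ≤ μ^{1/3}`.
Hence `E₂[ω] ≤ δ^{-1/3} μ^{2/3} / 2`.
-/

open Set
open scoped ENNReal NNReal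

theorem Real.log_one_add_le_rpow_div {s ε : ℝ} (hs : 0 ≤ s) (hε : 0 < ε) (hε1 : ε ≤ 1) :
    log (1 + s) ≤ s ^ ε / ε := by
  have hsε : 0 ≤ s ^ ε := rpow_nonneg hs ε
  have hsup : 1 + s ≤ (1 + s ^ ε) ^ ε⁻¹ := by
    have := add_rpow_le_rpow_add zero_le_one hsε (one_le_inv_iff₀.2 ⟨hε, hε1⟩)
    rwa [one_rpow, ← rpow_mul hs, mul_inv_cancel₀ hε.ne', rpow_one] at this
  calc log (1 + s) ≤ log ((1 + s ^ ε) ^ ε⁻¹) := log_le_log (by positivity) hsup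
    _ = log (1 + s ^ ε) / ε := by rw [log_rpow (by positivity)]; ring
    _ ≤ s ^ ε / ε := by
        gcongr
        linarith [log_le_sub_one_of_pos (show 0 < 1 + s ^ ε by positivity)]

theorem Real.mul_exp_half_le_exp_sub_one {x : ℝ} (hx : 0 ≤ x) : x * exp (x / 2) ≤ exp x - 1 := by
  have hsinh : x / 2 ≤ sinh (x / 2) := self_le_sinh_iff.2 (by positivity)
  have hsq : exp x = exp (x / 2) * exp (x / 2) := by rw [← exp_add]; ring_nf
  have hinv : exp (-(x / 2)) * exp (x / 2) = 1 := by rw [← exp_add]; simp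
  rw [sinh_eq] at hsinh
  nlinarith [exp_pos (x / 2)]

theorem Real.rpow_le_mul_add_mul {t m p : ℝ} (ht : 0 ≤ t) (hm : 0 < m) (hp0 : 0 ≤ p)
    (hp1 : p ≤ 1) : t ^ p ≤ p * m ^ (p - 1) * t + (1 - p) * m ^ p := by
  have hamgm := geom_mean_le_arith_mean2_weighted hp0 (sub_nonneg.2 hp1) ht hm.le
    (add_sub_cancel p 1)
  have hm' : m ^ (1 - p) * m ^ (p - 1) = 1 := by rw [← rpow_add hm]; simp
  have hmp : m * m ^ (p - 1) = m ^ p := by rw [rpow_sub_one hm.ne']; field_simp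
  calc t ^ p = t ^ p * m ^ (1 - p) * m ^ (p - 1) := by rw [mul_assoc, hm', mul_one]
    _ ≤ (p * t + (1 - p) * m) * m ^ (p - 1) := by gcongr
    _ = p * m ^ (p - 1) * t + (1 - p) * m ^ p := by rw [← hmp]; ring

theorem ENNReal.two_mul_le_add_sq (a b : ℝ≥0∞) : 2 * a * b ≤ a ^ 2 + b ^ 2 := by
  rcases eq_or_ne a ⊤ with rfl | ha
  · rcases eq_or_ne b 0 with rfl | hb <;> simp [*]
  rcases eq_or_ne b ⊤ with rfl | hb
  · simp
  lift a to ℝ≥0 using ha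
  lift b to ℝ≥0 using hb
  exact_mod_cast _root_.two_mul_le_add_sq a b

section Lintegral

variable {α : Type*} [MeasurableSpace α] {ν : Measure α}

theorem ofReal_integral_le_lintegral_ofReal (f : α → ℝ) :
    ENNReal.ofReal (∫ a, f a ∂ν) ≤ ∫⁻ a, ENNReal.ofReal (f a) ∂ν := by
  by_cases hf : Integrable f ν
  · rw [integral_eq_lintegral_pos_part_sub_lintegral_neg_part hf]
    exact (ENNReal.ofReal_le_ofReal (sub_le_self _ ENNReal.toReal_nonneg)).trans
      ENNReal.ofReal_toReal_le
  · simp [integral_undef hf]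

theorem lintegral_ofReal_rpow_mul_le {h : α → ℝ} {w : α → ℝ≥0∞} {m p : ℝ}
    (hh : ∀ᵐ a ∂ν, 0 ≤ h a) (hw : Measurable w) (hm : 0 < m) (hp0 : 0 ≤ p) (hp1 : p ≤ 1)
    (hmoment : ∫⁻ a, ENNReal.ofReal (h a) * w a ∂ν ≤ ENNReal.ofReal m)
    (hmass : ∫⁻ a, w a ∂ν ≤ 1) :
    ∫⁻ a, ENNReal.ofReal (h a ^ p) * w a ∂ν ≤ ENNReal.ofReal (m ^ p) := by
  set A := p * m ^ (p - 1)
  set B := (1 - p) * m ^ p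
  have hA : 0 ≤ A := by positivity
  have hB : 0 ≤ B := mul_nonneg (sub_nonneg.2 hp1) (by positivity)
  calc ∫⁻ a, ENNReal.ofReal (h a ^ p) * w a ∂ν
      ≤ ∫⁻ a, ENNReal.ofReal A * (ENNReal.ofReal (h a) * w a) + ENNReal.ofReal B * w a ∂ν := by
        refine lintegral_mono_ae (hh.mono fun a ha => ?_)
        rw [← mul_assoc, ← ENNReal.ofReal_mul hA, ← add_mul,
          ← ENNReal.ofReal_add (by positivity) hB]
        gcongr
        exact rpow_le_mul_add_mul ha hm hp0 hp1
    _ = ENNReal.ofReal A * ∫⁻ a, ENNReal.ofReal (h a) * w a ∂ν +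
          ENNReal.ofReal B * ∫⁻ a, w a ∂ν := by
        rw [lintegral_add_right _ (hw.const_mul _), lintegral_const_mul' _ _ ENNReal.ofReal_ne_top,
          lintegral_const_mul _ hw]
    _ ≤ ENNReal.ofReal A * ENNReal.ofReal m + ENNReal.ofReal B * 1 := by gcongr
    _ = ENNReal.ofReal (m ^ p) := by
        rw [mul_one, ← ENNReal.ofReal_mul hA, ← ENNReal.ofReal_add (by positivity) hB]
        congr 1
        simp only [A, B, mul_assoc]
        rw [rpow_sub_one hm.ne']
        field_simp
        ring

theorem lintegral_lintegral_const_mul_mul (c : ℝ≥0∞) {v : α → ℝ≥0∞} (hv : Measurable v) :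
    ∫⁻ x, ∫⁻ y, c * (v x * v y) ∂ν ∂ν = c * (∫⁻ x, v x ∂ν) ^ 2 := by
  calc ∫⁻ x, ∫⁻ y, c * (v x * v y) ∂ν ∂ν = ∫⁻ x, c * v x * ∫⁻ y, v y ∂ν ∂ν := by
        refine lintegral_congr fun x => ?_
        rw [← lintegral_const_mul _ hv]
        simp_rw [mul_assoc]
    _ = c * (∫⁻ x, v x ∂ν) ^ 2 := by
        rw [lintegral_mul_const _ (hv.const_mul c), lintegral_const_mul _ hv]
        ring

variable {K : α → α → ℝ≥0∞} {C : ℝ≥0∞} {w : α → ℝ≥0∞}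

theorem lintegral_lintegral_mul_sq_le_of_row (hK : Measurable (Function.uncurry K))
    (hw : Measurable w) (hrow : ∀ᵐ x ∂ν, ∫⁻ y, K x y ∂ν ≤ C) :
    ∫⁻ x, ∫⁻ y, K x y * w x ^ 2 ∂ν ∂ν ≤ C * ∫⁻ x, w x ^ 2 ∂ν := by
  calc ∫⁻ x, ∫⁻ y, K x y * w x ^ 2 ∂ν ∂ν = ∫⁻ x, (∫⁻ y, K x y ∂ν) * w x ^ 2 ∂ν :=
        lintegral_congr fun x => lintegral_mul_const _ (hK.comp measurable_prodMk_left)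
    _ ≤ ∫⁻ x, C * w x ^ 2 ∂ν := lintegral_mono_ae (hrow.mono fun x hx => by gcongr)
    _ = C * ∫⁻ x, w x ^ 2 ∂ν := lintegral_const_mul _ (hw.pow_const 2)

theorem lintegral_lintegral_mul_le_of_row_col [SFinite ν] (hK : Measurable (Function.uncurry K))
    (hrow : ∀ᵐ x ∂ν, ∫⁻ y, K x y ∂ν ≤ C) (hcol : ∀ᵐ y ∂ν, ∫⁻ x, K x y ∂ν ≤ C)
    (hw : Measurable w) :
    ∫⁻ x, ∫⁻ y, K x y * (w x * w y) ∂ν ∂ν ≤ C * ∫⁻ x, w x ^ 2 ∂ν := by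
  have hrow' := lintegral_lintegral_mul_sq_le_of_row hK hw hrow
  have hcol' : ∫⁻ x, ∫⁻ y, K x y * w y ^ 2 ∂ν ∂ν ≤ C * ∫⁻ x, w x ^ 2 ∂ν := by
    rw [lintegral_lintegral_swap (by fun_prop)]
    exact lintegral_lintegral_mul_sq_le_of_row (hK.comp measurable_swap) hw hcol
  rw [← ENNReal.mul_le_mul_iff_right two_ne_zero ENNReal.ofNat_ne_top]
  calc 2 * ∫⁻ x, ∫⁻ y, K x y * (w x * w y) ∂ν ∂ν
      = ∫⁻ x, ∫⁻ y, K x y * (2 * w x * w y) ∂ν ∂ν := by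
        rw [← lintegral_const_mul' _ _ ENNReal.ofNat_ne_top]
        refine lintegral_congr fun x => ?_
        rw [← lintegral_const_mul' _ _ ENNReal.ofNat_ne_top]
        exact lintegral_congr fun y => by ring
    _ ≤ ∫⁻ x, ∫⁻ y, (K x y * w x ^ 2 + K x y * w y ^ 2) ∂ν ∂ν := by
        gcongr with x y
        rw [← mul_add]
        gcongr
        exact ENNReal.two_mul_le_add_sq _ _
    _ = ∫⁻ x, ∫⁻ y, K x y * w x ^ 2 ∂ν ∂ν + ∫⁻ x, ∫⁻ y, K x y * w y ^ 2 ∂ν ∂ν := by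
        rw [← lintegral_add_left (by fun_prop)]
        exact lintegral_congr fun x => lintegral_add_left (by fun_prop) _
    _ ≤ 2 * (C * ∫⁻ x, w x ^ 2 ∂ν) := by rw [two_mul]; gcongr

end Lintegral

theorem sqdist_nonneg (x y : ℝ × ℝ) : 0 ≤ sqdist x y := by
  unfold sqdist; positivity

theorem sqdist_comm (x y : ℝ × ℝ) : sqdist x y = sqdist y x := by
  unfold sqdist; ring

theorem dist_sq_le_sqdist (x y : ℝ × ℝ) : dist y x ^ 2 ≤ sqdist x y := by
  rw [Prod.dist_eq, Real.dist_eq, Real.dist_eq, sqdist]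
  rcases max_cases |y.1 - x.1| |y.2 - x.2| with ⟨h, _⟩ | ⟨h, _⟩ <;>
    rw [h, sq_abs] <;> nlinarith

theorem volume_ball_prod (x : ℝ × ℝ) (r : ℝ) :
    volume (Metric.ball x r) = ENNReal.ofReal (2 * r) * ENNReal.ofReal (2 * r) := by
  rw [← Prod.mk.eta (p := x), ← ball_prod_same, Measure.volume_eq_prod, Measure.prod_prod,
    Real.volume_ball, Real.volume_ball]

theorem measurableSet_upperHalf : MeasurableSet upperHalf :=
  measurableSet_lt measurable_const measurable_snd

theorem halfPlaneGreen_comm (x y : ℝ × ℝ) : halfPlaneGreen x y = halfPlaneGreen y x := by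
  rw [halfPlaneGreen, halfPlaneGreen, sqdist_comm, mul_right_comm 4 x.2]

theorem halfPlaneGreen_nonneg {x y : ℝ × ℝ} (hx : 0 ≤ x.2) (hy : 0 ≤ y.2) :
    0 ≤ halfPlaneGreen x y := by
  have : 0 ≤ 4 * x.2 * y.2 / sqdist x y := div_nonneg (by positivity) (sqdist_nonneg x y)
  exact mul_nonneg (by positivity) (log_nonneg (by linarith))

theorem measurable_halfPlaneGreen : Measurable (Function.uncurry halfPlaneGreen) := by
  unfold Function.uncurry halfPlaneGreen sqdist
  fun_prop

theorem halfPlaneGreen_le_of_far {δ : ℝ} (hδ : 0 < δ) {x y : ℝ × ℝ} (hx : 0 < x.2)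
    (hy : 0 < y.2) (hfar : δ ^ 4 < sqdist x y ^ 3 * (x.2 * y.2)) :
    halfPlaneGreen x y ≤ (x.2 * y.2 / δ) ^ (1 / 3 : ℝ) := by
  have hd : 0 < sqdist x y := by
    refine (sqdist_nonneg x y).lt_of_ne fun h => ?_
    rw [← h] at hfar
    linarith [pow_pos hδ 4, show (0 : ℝ) ^ 3 * (x.2 * y.2) = 0 by ring]
  set P := x.2 * y.2
  set d := sqdist x y
  set a := (P / δ) ^ (1 / 3 : ℝ)
  have hP : 0 < P := mul_pos hx hy
  have ha : 0 < a := by positivity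
  have ha3 : a ^ 3 = P / δ := by
    rw [← rpow_natCast, ← rpow_mul (by positivity)]; norm_num
  have hδad : δ < a * d := by
    refine lt_of_pow_lt_pow_left₀ 3 (by positivity) ?_
    rw [mul_pow, ha3, div_mul_eq_mul_div, lt_div_iff₀ hδ]
    linarith
  have hs : 4 * x.2 * y.2 / d ≤ (2 * a) ^ 4 := by
    rw [div_le_iff₀ hd, mul_assoc 4]
    change 4 * P ≤ _
    rw [show P = a ^ 3 * δ by rw [ha3]; field_simp]
    nlinarith [pow_pos ha 3]
  have hlog : log (1 + 4 * x.2 * y.2 / d) ≤ 4 * (2 * a) := by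
    calc log (1 + 4 * x.2 * y.2 / d)
        ≤ (4 * x.2 * y.2 / d) ^ ((4 : ℕ) : ℝ)⁻¹ / ((4 : ℕ) : ℝ)⁻¹ :=
          log_one_add_le_rpow_div (by positivity) (by norm_num) (by norm_num)
      _ ≤ ((2 * a) ^ 4) ^ ((4 : ℕ) : ℝ)⁻¹ / ((4 : ℕ) : ℝ)⁻¹ := by gcongr
      _ = 4 * (2 * a) := by
          rw [pow_rpow_inv_natCast (by positivity) (by norm_num)]; norm_num; ring
  calc halfPlaneGreen x y = 1 / (4 * π) * log (1 + 4 * x.2 * y.2 / d) := rfl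
    _ ≤ 1 / (4 * π) * (4 * (2 * a)) := by gcongr
    _ ≤ a := by
        rw [div_mul_eq_mul_div, div_le_iff₀ (by positivity)]
        nlinarith [pi_gt_three]

noncomputable def nearGreen (δ : ℝ) (x y : ℝ × ℝ) : ℝ :=
  if sqdist x y ^ 3 * (x.2 * y.2) ≤ δ ^ 4 then halfPlaneGreen x y else 0

theorem nearGreen_comm (δ : ℝ) (x y : ℝ × ℝ) : nearGreen δ x y = nearGreen δ y x := by
  rw [nearGreen, nearGreen, sqdist_comm, mul_comm x.2, halfPlaneGreen_comm]

theorem nearGreen_nonneg (δ : ℝ) {x y : ℝ × ℝ} (hx : 0 ≤ x.2) (hy : 0 ≤ y.2) :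
    0 ≤ nearGreen δ x y := by
  unfold nearGreen
  split_ifs
  exacts [halfPlaneGreen_nonneg hx hy, le_rfl]

theorem measurable_nearGreen (δ : ℝ) : Measurable (Function.uncurry (nearGreen δ)) := by
  refine Measurable.ite ?_ measurable_halfPlaneGreen measurable_const
  refine measurableSet_le ?_ measurable_const
  unfold sqdist
  fun_prop

theorem ofReal_halfPlaneGreen_le_add {δ : ℝ} (hδ : 0 < δ) {x y : ℝ × ℝ} (hx : 0 < x.2)
    (hy : 0 < y.2) :
    ENNReal.ofReal (halfPlaneGreen x y) ≤ ENNReal.ofReal (nearGreen δ x y) +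
      ENNReal.ofReal (δ ^ (-(1 / 3) : ℝ)) *
        (ENNReal.ofReal (x.2 ^ (1 / 3 : ℝ)) * ENNReal.ofReal (y.2 ^ (1 / 3 : ℝ))) := by
  have hfar : δ ^ (-(1 / 3) : ℝ) * (x.2 ^ (1 / 3 : ℝ) * y.2 ^ (1 / 3 : ℝ)) =
      (x.2 * y.2 / δ) ^ (1 / 3 : ℝ) := by
    rw [div_rpow (by positivity) hδ.le, mul_rpow hx.le hy.le, rpow_neg hδ.le, inv_mul_eq_div]
  rw [← ENNReal.ofReal_mul (by positivity), ← ENNReal.ofReal_mul (by positivity), hfar,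
    ← ENNReal.ofReal_add (nearGreen_nonneg δ hx.le hy.le) (by positivity)]
  refine ENNReal.ofReal_le_ofReal ?_
  rw [nearGreen]
  split_ifs with hnear
  · exact le_add_of_nonneg_right (by positivity)
  · rw [zero_add]
    exact halfPlaneGreen_le_of_far hδ hx hy (not_le.1 hnear)

theorem sqdist_lt_of_lt_nearGreen {δ t : ℝ} (hδ : 0 < δ) {x y : ℝ × ℝ} (hx : 0 < x.2)
    (hy : 0 < y.2) (ht : 0 < t) (hlt : t < nearGreen δ x y) :
    sqdist x y < 2 * δ * (exp (-t) * t ^ (-(1 / 4) : ℝ)) := by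
  unfold nearGreen at hlt
  split_ifs at hlt with hnear
  swap
  · linarith
  set d := sqdist x y
  set s := 4 * x.2 * y.2 / d
  have hs0 : 0 ≤ s := div_nonneg (by positivity) (sqdist_nonneg x y)
  have hs : exp (4 * π * t) - 1 < s := by
    have hlog : 4 * π * t < log (1 + s) := by
      rw [halfPlaneGreen, one_div_mul_eq_div, lt_div_iff₀ (by positivity)] at hlt
      linarith
    linarith [(lt_log_iff_exp_lt (by linarith)).1 hlog]
  have hexp : t * exp (4 * t) ≤ exp (4 * π * t) - 1 := by
    refine le_trans ?_ (mul_exp_half_le_exp_sub_one (by positivity))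
    gcongr <;> nlinarith [pi_gt_three]
  have hte : 0 < t * exp (4 * t) := by positivity
  have hd : 0 < d := by
    refine (sqdist_nonneg x y).lt_of_ne fun h => ?_
    have : s = 0 := by simp [s, d, ← h]
    linarith
  have hsd : s * d ^ 4 ≤ 4 * δ ^ 4 := by
    have : s * d ^ 4 = 4 * (d ^ 3 * (x.2 * y.2)) := by simp only [s]; field_simp
    rw [this]
    linarith
  set ρ := 2 * δ * (exp (-t) * t ^ (-(1 / 4) : ℝ))
  have hρ : ρ ^ 4 * (t * exp (4 * t)) = 16 * δ ^ 4 := by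
    have ht4 : (t ^ (-(1 / 4) : ℝ)) ^ 4 * t = 1 := by
      rw [← rpow_natCast, ← rpow_mul ht.le]; norm_num
      rw [rpow_neg_one, inv_mul_cancel₀ ht.ne']
    have he4 : exp (-t) ^ 4 * exp (4 * t) = 1 := by
      rw [← exp_nat_mul, ← exp_add]; norm_num
    calc ρ ^ 4 * (t * exp (4 * t))
        = 16 * δ ^ 4 * ((t ^ (-(1 / 4) : ℝ)) ^ 4 * t) * (exp (-t) ^ 4 * exp (4 * t)) := by ring
      _ = 16 * δ ^ 4 := by rw [ht4, he4]; ring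
  refine lt_of_pow_lt_pow_left₀ 4 (by positivity) ?_
  refine lt_of_mul_lt_mul_right ?_ hte.le
  rw [hρ]
  nlinarith [pow_pos hd 4, pow_pos hδ 4]

theorem measure_lt_nearGreen_le {δ t : ℝ} (hδ : 0 < δ) {x : ℝ × ℝ} (hx : 0 < x.2) (ht : 0 < t) :
    volume.restrict upperHalf {y | t < nearGreen δ x y} ≤
      ENNReal.ofReal (8 * δ * (exp (-t) * t ^ (-(1 / 4) : ℝ))) := by
  set ρ := 2 * δ * (exp (-t) * t ^ (-(1 / 4) : ℝ))
  have hρ : 0 ≤ ρ := by positivity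
  have hsub : {y | t < nearGreen δ x y} ∩ upperHalf ⊆ Metric.ball x (√ρ) := by
    rintro y ⟨hlt, hy⟩
    rw [Metric.mem_ball, lt_sqrt dist_nonneg]
    exact (dist_sq_le_sqdist x y).trans_lt (sqdist_lt_of_lt_nearGreen hδ hx hy ht hlt)
  calc volume.restrict upperHalf {y | t < nearGreen δ x y}
      = volume ({y | t < nearGreen δ x y} ∩ upperHalf) :=
        Measure.restrict_apply' measurableSet_upperHalf
    _ ≤ volume (Metric.ball x (√ρ)) := measure_mono hsub
    _ = ENNReal.ofReal (8 * δ * (exp (-t) * t ^ (-(1 / 4) : ℝ))) := by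
        rw [volume_ball_prod, ← ENNReal.ofReal_mul (by positivity)]
        congr 1
        nlinarith [mul_self_sqrt hρ]

theorem lintegral_nearGreen_le {δ : ℝ} (hδ : 0 < δ) {x : ℝ × ℝ} (hx : 0 < x.2) :
    ∫⁻ y in upperHalf, ENNReal.ofReal (nearGreen δ x y) ≤
      ENNReal.ofReal (8 * Gamma (3 / 4) * δ) := by
  have hnn : 0 ≤ᵐ[volume.restrict upperHalf] fun y => nearGreen δ x y :=
    (ae_restrict_mem measurableSet_upperHalf).mono fun y hy =>
      nearGreen_nonneg δ hx.le (le_of_lt hy)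
  have hΓ : IntegrableOn (fun t : ℝ => exp (-t) * t ^ ((3 / 4 : ℝ) - 1)) (Ioi 0) :=
    GammaIntegral_convergent (by norm_num)
  rw [lintegral_eq_lintegral_meas_lt _ hnn
    ((measurable_nearGreen δ).comp measurable_prodMk_left).aemeasurable]
  calc ∫⁻ t in Ioi 0, volume.restrict upperHalf {y | t < nearGreen δ x y}
      ≤ ∫⁻ t in Ioi 0, ENNReal.ofReal (8 * δ * (exp (-t) * t ^ ((3 / 4 : ℝ) - 1))) := by
        refine setLIntegral_mono' measurableSet_Ioi fun t ht => ?_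
        convert measure_lt_nearGreen_le hδ hx ht using 4
        norm_num
    _ = ENNReal.ofReal (8 * Gamma (3 / 4) * δ) := by
        rw [← ofReal_integral_eq_lintegral_ofReal (hΓ.const_mul _)
          ((ae_restrict_mem measurableSet_Ioi).mono fun t (ht : 0 < t) => by positivity),
          integral_const_mul, ← Gamma_eq_integral (by norm_num)]
        ring_nf

theorem lintegral_halfPlaneGreen_mul_le {δ : ℝ} (hδ : 0 < δ) {w : ℝ × ℝ → ℝ≥0∞}
    (hw : Measurable w) :
    ∫⁻ x in upperHalf, ∫⁻ y in upperHalf, ENNReal.ofReal (halfPlaneGreen x y) * (w x * w y) ≤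
      ENNReal.ofReal (8 * Gamma (3 / 4) * δ) * (∫⁻ x in upperHalf, w x ^ 2) +
        ENNReal.ofReal (δ ^ (-(1 / 3) : ℝ)) *
          (∫⁻ x in upperHalf, ENNReal.ofReal (x.2 ^ (1 / 3 : ℝ)) * w x) ^ 2 := by
  set c := ENNReal.ofReal (δ ^ (-(1 / 3) : ℝ))
  set v : ℝ × ℝ → ℝ≥0∞ := fun x => ENNReal.ofReal (x.2 ^ (1 / 3 : ℝ)) * w x
  have hv : Measurable v := (ENNReal.measurable_ofReal.comp (by fun_prop)).mul hw
  have hN : Measurable (Function.uncurry fun x y => ENNReal.ofReal (nearGreen δ x y)) :=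
    (measurable_nearGreen δ).ennreal_ofReal
  have hpt : ∀ x ∈ upperHalf, ∀ y ∈ upperHalf,
      ENNReal.ofReal (halfPlaneGreen x y) * (w x * w y) ≤
        ENNReal.ofReal (nearGreen δ x y) * (w x * w y) + c * (v x * v y) := by
    intro x (hx : 0 < x.2) y (hy : 0 < y.2)
    calc ENNReal.ofReal (halfPlaneGreen x y) * (w x * w y)
        ≤ (ENNReal.ofReal (nearGreen δ x y) +
            c * (ENNReal.ofReal (x.2 ^ (1 / 3 : ℝ)) * ENNReal.ofReal (y.2 ^ (1 / 3 : ℝ)))) *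
          (w x * w y) := by gcongr; exact ofReal_halfPlaneGreen_le_add hδ hx hy
      _ = ENNReal.ofReal (nearGreen δ x y) * (w x * w y) + c * (v x * v y) := by ring
  have hrow : ∀ᵐ x ∂volume.restrict upperHalf, ∫⁻ y in upperHalf,
      ENNReal.ofReal (nearGreen δ x y) ≤ ENNReal.ofReal (8 * Gamma (3 / 4) * δ) :=
    (ae_restrict_mem measurableSet_upperHalf).mono fun x hx => lintegral_nearGreen_le hδ hx
  have hcol : ∀ᵐ y ∂volume.restrict upperHalf, ∫⁻ x in upperHalf,
      ENNReal.ofReal (nearGreen δ x y) ≤ ENNReal.ofReal (8 * Gamma (3 / 4) * δ) := by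
    simp_rw [nearGreen_comm δ _]
    exact hrow
  calc ∫⁻ x in upperHalf, ∫⁻ y in upperHalf, ENNReal.ofReal (halfPlaneGreen x y) * (w x * w y)
      ≤ ∫⁻ x in upperHalf, ∫⁻ y in upperHalf,
          (ENNReal.ofReal (nearGreen δ x y) * (w x * w y) + c * (v x * v y)) :=
        setLIntegral_mono' measurableSet_upperHalf fun x hx =>
          setLIntegral_mono' measurableSet_upperHalf fun y hy => hpt x hx y hy
    _ = (∫⁻ x in upperHalf, ∫⁻ y in upperHalf,
            ENNReal.ofReal (nearGreen δ x y) * (w x * w y)) +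
          ∫⁻ x in upperHalf, ∫⁻ y in upperHalf, c * (v x * v y) := by
        rw [← lintegral_add_left]
        · exact lintegral_congr fun x =>
            lintegral_add_left ((hN.comp measurable_prodMk_left).mul (by fun_prop)) _
        · exact Measurable.lintegral_prod_right'
            (f := fun p => ENNReal.ofReal (nearGreen δ p.1 p.2) * (w p.1 * w p.2))
            (hN.mul (by fun_prop))
    _ ≤ _ := by
        rw [lintegral_lintegral_const_mul_mul c hv]
        exact add_le_add (lintegral_lintegral_mul_le_of_row_col hN hrow hcol hw) le_rfl

section Admissible

variable {μ : ℝ} {ω : ℝ × ℝ → ℝ}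

theorem memK.congr_ae (h : memK μ ω) {ω' : ℝ × ℝ → ℝ} (h0 : ∀ p, 0 ≤ ω' p)
    (hae : ω =ᵐ[volume.restrict upperHalf] ω') : memK μ ω' := by
  obtain ⟨-, hint, hL2, hmom_int, hmom, hmass⟩ := h
  have hae' : (fun p : ℝ × ℝ => p.2 * ω p) =ᵐ[volume.restrict upperHalf] fun p => p.2 * ω' p :=
    hae.mono fun p hp => by simp only [hp]
  exact ⟨h0, hint.congr hae, (memLp_congr_ae hae).1 hL2, hmom_int.congr hae',
    (integral_congr_ae hae').symm.trans hmom, (integral_congr_ae hae).symm.trans_le hmass⟩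

theorem memK.exists_measurable (h : memK μ ω) :
    ∃ ω', Measurable ω' ∧ ω =ᵐ[volume.restrict upperHalf] ω' ∧ memK μ ω' := by
  have hω := h.2.1.aemeasurable
  have hae : ω =ᵐ[volume.restrict upperHalf] fun p => max (hω.mk ω p) 0 :=
    hω.ae_eq_mk.mono fun p hp => by simp only [← hp, max_eq_left (h.1 p)]
  exact ⟨_, hω.measurable_mk.max measurable_const, hae, h.congr_ae (fun p => le_max_right _ _) hae⟩

theorem E₂_congr_ae {ω' : ℝ × ℝ → ℝ} (hae : ω =ᵐ[volume.restrict upperHalf] ω') :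
    E₂ ω = E₂ ω' := by
  unfold E₂ kineticEnergy
  congr 2
  · refine integral_congr_ae (hae.mono fun x hx => integral_congr_ae (hae.mono fun y hy => ?_))
    simp only [hx, hy]
  · exact integral_congr_ae (hae.mono fun p hp => by simp only [hp])

theorem memK.lintegral_sq (h : memK μ ω) :
    ∫⁻ p in upperHalf, ENNReal.ofReal (ω p) ^ 2 = ENNReal.ofReal (∫ p in upperHalf, ω p ^ 2) := by
  rw [ofReal_integral_eq_lintegral_ofReal h.2.2.1.integrable_sq (ae_of_all _ fun p => sq_nonneg _)]
  simp_rw [ENNReal.ofReal_pow (h.1 _)]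

theorem memK.lintegral_rpow_third_le (h : memK μ ω) (hμ : 0 < μ) (hmeas : Measurable ω) :
    ∫⁻ p in upperHalf, ENNReal.ofReal (p.2 ^ (1 / 3 : ℝ)) * ENNReal.ofReal (ω p) ≤
      ENNReal.ofReal (μ ^ (1 / 3 : ℝ)) := by
  obtain ⟨h0, hint, -, hmom_int, hmom, hmass⟩ := h
  have hH : ∀ᵐ p ∂volume.restrict upperHalf, 0 ≤ p.2 :=
    (ae_restrict_mem measurableSet_upperHalf).mono fun p (hp : 0 < p.2) => hp.le
  refine lintegral_ofReal_rpow_mul_le hH hmeas.ennreal_ofReal hμ (by norm_num) (by norm_num) ?_ ?_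
  · rw [← hmom, ofReal_integral_eq_lintegral_ofReal hmom_int
      (hH.mono fun p hp => mul_nonneg hp (h0 p))]
    simp_rw [ENNReal.ofReal_mul' (h0 _), le_rfl]
  · rw [← ofReal_integral_eq_lintegral_ofReal hint (ae_of_all _ h0)]
    exact ENNReal.ofReal_le_one.2 hmass

theorem E₂_le_of_measurable {δ : ℝ} (hδ : 0 < δ) (hδΓ : 8 * Gamma (3 / 4) * δ ≤ 1)
    (hμ : 0 < μ) (hω : memK μ ω) (hmeas : Measurable ω) :
    E₂ ω ≤ δ ^ (-(1 / 3) : ℝ) / 2 * μ ^ ((2 : ℝ) / 3) := by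
  set I := ∫ p in upperHalf, ω p ^ 2
  have hI : 0 ≤ I := integral_nonneg fun p => sq_nonneg _
  have hkin : ENNReal.ofReal (2 * kineticEnergy ω) ≤
      ENNReal.ofReal (I + δ ^ (-(1 / 3) : ℝ) * μ ^ ((2 : ℝ) / 3)) := by
    calc ENNReal.ofReal (2 * kineticEnergy ω)
        = ENNReal.ofReal (∫ x in upperHalf, ∫ y in upperHalf, halfPlaneGreen x y * ω x * ω y) := by
          rw [kineticEnergy, ← mul_assoc]; norm_num
      _ ≤ ∫⁻ x in upperHalf, ∫⁻ y in upperHalf, ENNReal.ofReal (halfPlaneGreen x y * ω x * ω y) :=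
          (ofReal_integral_le_lintegral_ofReal _).trans
            (lintegral_mono fun x => ofReal_integral_le_lintegral_ofReal _)
      _ = ∫⁻ x in upperHalf, ∫⁻ y in upperHalf,
            ENNReal.ofReal (halfPlaneGreen x y) * (ENNReal.ofReal (ω x) * ENNReal.ofReal (ω y)) := by
          simp_rw [ENNReal.ofReal_mul' (hω.1 _), mul_assoc]
      _ ≤ 1 * ENNReal.ofReal I + ENNReal.ofReal (δ ^ (-(1 / 3) : ℝ)) *
            ENNReal.ofReal (μ ^ (1 / 3 : ℝ)) ^ 2 := by
          refine (lintegral_halfPlaneGreen_mul_le hδ hmeas.ennreal_ofReal).trans ?_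
          rw [hω.lintegral_sq]
          gcongr
          · exact ENNReal.ofReal_le_one.2 hδΓ
          · exact hω.lintegral_rpow_third_le hμ hmeas
      _ = ENNReal.ofReal (I + δ ^ (-(1 / 3) : ℝ) * μ ^ ((2 : ℝ) / 3)) := by
          rw [one_mul, ← ENNReal.ofReal_pow (by positivity), ← ENNReal.ofReal_mul (by positivity),
            ← ENNReal.ofReal_add hI (by positivity), ← rpow_natCast, ← rpow_mul hμ.le]
          norm_num
  rw [ENNReal.ofReal_le_ofReal_iff (by positivity)] at hkin
  rw [E₂]
  linarith

end Admissible

/-- `sup_{ω ∈ K_μ} E₂[ω] ≤ C μ^{2/3}` for an absolute constant `C`; in particular it is finite. -/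
theorem penalized_energy_sup_finite :
    ∃ C > 0, ∀ μ : ℝ, 0 < μ → ∀ ω : ℝ × ℝ → ℝ, memK μ ω →
      E₂ ω ≤ C * μ ^ ((2 : ℝ) / 3) := by
  have hΓ : 0 < Gamma (3 / 4) := Gamma_pos_of_pos (by norm_num)
  set δ := (8 * Gamma (3 / 4))⁻¹
  have hδ : 0 < δ := by positivity
  have hδΓ : 8 * Gamma (3 / 4) * δ ≤ 1 := (mul_inv_cancel₀ (by positivity)).le
  refine ⟨δ ^ (-(1 / 3) : ℝ) / 2, by positivity, fun μ hμ ω hω => ?_⟩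
  obtain ⟨ω', hmeas, hae, hω'⟩ := hω.exists_measurable
  rw [E₂_congr_ae hae]
  exact E₂_le_of_measurable hδ hδΓ hμ hω' hmeas
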